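/- Let n ≥ 2 and r ≥ 3, and let N_{n,r} be the free nilpotent group of rank n and step r with free generating family X = (x_1, …, x_n). Then 2(n−1) ≤ pw(N_{n,r}, X) ≤ 3n. -/

import Mathlib

/-- The element of `G` represented by a word in the alphabet `X^{±1}`:
a letter `(i, true)` stands for `X i` and `(i, false)` for `(X i)⁻¹`. -/
def evalWord {G : Type*} {n : ℕ} [Group G] (X : Fin n → G) (w : List (Fin n × Bool)) : G :=
  (w.map fun l => if l.2 then X l.1 else (X l.1)⁻¹).prod

/-- `g` is a palindrome with respect to the generating family `X` if it is represented by
some word whose sequence of letters equals its reverse. -/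
def IsPalindrome {G : Type*} {n : ℕ} [Group G] (X : Fin n → G) (g : G) : Prop :=
  ∃ w : List (Fin n × Bool), w.reverse = w ∧ evalWord X w = g

/-- `g` is a product of `k` palindromes with respect to `X`. -/
def IsPalProd {G : Type*} {n : ℕ} [Group G] (X : Fin n → G) (k : ℕ) (g : G) : Prop :=
  ∃ f : Fin k → G, (∀ i, IsPalindrome X (f i)) ∧ (List.ofFn f).prod = g

/-- The palindromic length of `g` with respect to `X`, valued in `ℕ∞`. -/
noncomputable def palLength {G : Type*} {n : ℕ} [Group G] (X : Fin n → G) (g : G) : ℕ∞ :=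
  sInf {k : ℕ∞ | ∃ m : ℕ, k = (m : ℕ∞) ∧ IsPalProd X m g}

/-- The palindromic width of `G` with respect to `X`, valued in `ℕ∞`. -/
noncomputable def palWidth {G : Type*} {n : ℕ} [Group G] (X : Fin n → G) : ℕ∞ :=
  ⨆ g : G, palLength X g

/-- The free nilpotent group `N_{n,r}` of rank `n` and step `r`: the quotient of the free
group on `n` generators by `γ_{r+1} = lowerCentralSeries _ r` (indices: `γ_1` is the
whole group and corresponds to index `0`). -/
abbrev FreeNilpotent (n r : ℕ) :=
  FreeGroup (Fin n) ⧸ (⊤ : Subgroup (FreeGroup (Fin n))).lowerCentralSeries r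

/-- The images `x_1, …, x_n` of the free basis in `N_{n,r}`. -/
def nilGen (n r : ℕ) (i : Fin n) : FreeNilpotent n r :=
  QuotientGroup.mk (FreeGroup.of i)

/-! Upper bound: in a nilpotent group generated by `x₁, …, xₙ`, induction along the lower central
series writes every element as `∏ i, ⁅hᵢ, xᵢ⁆ * xᵢ ^ mᵢ`, and each factor
`⁅h, x⁆ * x ^ m = (h x h*) (h h*)⁻¹ x ^ (m - 1)`, with `h*` a word for `h` read backwards, is a
product of three palindromes.

Lower bound: for `r ≥ 2`, `N_{n,r}` maps to a coordinate model `NilTwo n` of the free nilpotent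
group of class 2, where word reversal is an anti-automorphism, so a palindrome `(a, b)` satisfies
`2 b i j = a i * a j`; in particular at most one `a i` is odd. For `w = x₁ ⋯ xₙ`, the element
`w* w⁻¹` has even `a` and odd `b i j` for all `i < j`, and a parity count shows that it needs
`2 (n - 1)` palindromic factors. -/

open scoped commutatorElement
open Subgroup

section Palindromes

variable {G H : Type*} [Group G] [Group H] {n : ℕ} {X : Fin n → G}

theorem evalWord_eq_lift_mk (X : Fin n → G) (w : List (Fin n × Bool)) :
    evalWord X w = FreeGroup.lift X (FreeGroup.mk w) := by
  simp [evalWord, FreeGroup.lift_mk, Bool.cond_eq_ite]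

theorem evalWord_append (X : Fin n → G) (v w : List (Fin n × Bool)) :
    evalWord X (v ++ w) = evalWord X v * evalWord X w := by
  simp [evalWord]

theorem map_evalWord (φ : G →* H) (X : Fin n → G) (w : List (Fin n × Bool)) :
    φ (evalWord X w) = evalWord (φ ∘ X) w := by
  simp only [evalWord, map_list_prod, List.map_map]
  congr 2
  ext ⟨i, b⟩
  cases b <;> simp

theorem exists_evalWord_eq (hX : closure (Set.range X) = ⊤) (g : G) :
    ∃ w, evalWord X w = g := by
  classical
  obtain ⟨x, rfl⟩ := (FreeGroup.lift_surjective_iff_closure_range_eq_top.mpr hX) g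
  exact ⟨x.toWord, by rw [evalWord_eq_lift_mk, FreeGroup.mk_toWord]⟩

theorem evalWord_reverse_map_not (X : Fin n → G) (w : List (Fin n × Bool)) :
    evalWord X (w.map fun l => (l.1, !l.2)).reverse = (evalWord X w)⁻¹ := by
  simp only [evalWord, List.prod_inv_reverse, List.map_reverse, List.map_map]
  congr 3
  ext ⟨i, b⟩
  cases b <;> simp

theorem IsPalindrome.inv {g : G} (hg : IsPalindrome X g) : IsPalindrome X g⁻¹ := by
  obtain ⟨w, hw, rfl⟩ := hg
  refine ⟨(w.map fun l => (l.1, !l.2)).reverse, ?_, evalWord_reverse_map_not X w⟩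
  rw [List.reverse_reverse, ← List.map_reverse, hw]

theorem IsPalindrome.map {g : G} (hg : IsPalindrome X g) (φ : G →* H) :
    IsPalindrome (φ ∘ X) (φ g) := by
  obtain ⟨w, hw, rfl⟩ := hg
  exact ⟨w, hw, (map_evalWord φ X w).symm⟩

theorem isPalindrome_evalWord_append_append_reverse (X : Fin n → G)
    (v m : List (Fin n × Bool)) (hm : m.reverse = m) :
    IsPalindrome X (evalWord X v * evalWord X m * evalWord X v.reverse) :=
  ⟨v ++ m ++ v.reverse, by simp [hm], by simp only [evalWord_append]⟩

theorem isPalindrome_zpow (X : Fin n → G) (i : Fin n) (m : ℤ) : IsPalindrome X (X i ^ m) := by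
  have hpow (k : ℕ) : IsPalindrome X (X i ^ k) :=
    ⟨List.replicate k (i, true), List.reverse_replicate, by simp [evalWord]⟩
  cases m with
  | ofNat k => simpa using hpow k
  | negSucc k => simpa using (hpow (k + 1)).inv

theorem unop_map_evalWord (ρ : G →* Gᵐᵒᵖ) (hρ : ∀ i, ρ (X i) = MulOpposite.op (X i))
    (w : List (Fin n × Bool)) : (ρ (evalWord X w)).unop = evalWord X w.reverse := by
  simp only [evalWord, map_list_prod, MulOpposite.unop_list_prod, List.map_map, List.map_reverse]
  congr 3
  ext ⟨i, b⟩
  cases b <;> simp [hρ]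

theorem IsPalindrome.unop_eq (ρ : G →* Gᵐᵒᵖ) (hρ : ∀ i, ρ (X i) = MulOpposite.op (X i))
    {g : G} (hg : IsPalindrome X g) : (ρ g).unop = g := by
  obtain ⟨w, hw, rfl⟩ := hg
  rw [unop_map_evalWord ρ hρ, hw]

end Palindromes

section PalindromicLength

variable {G H : Type*} [Group G] [Group H] {n : ℕ} {X : Fin n → G}

theorem isPalProd_zero (X : Fin n → G) : IsPalProd X 0 1 :=
  ⟨Fin.elim0, fun i => i.elim0, rfl⟩

theorem IsPalindrome.isPalProd_one {g : G} (hg : IsPalindrome X g) : IsPalProd X 1 g :=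
  ⟨fun _ => g, fun _ => hg, by simp⟩

theorem IsPalProd.mul {k l : ℕ} {g h : G} (hg : IsPalProd X k g) (hh : IsPalProd X l h) :
    IsPalProd X (k + l) (g * h) := by
  obtain ⟨p, hp, rfl⟩ := hg
  obtain ⟨q, hq, rfl⟩ := hh
  exact ⟨Fin.append p q, Fin.addCases (by simpa using hp) (by simpa using hq),
    by rw [List.ofFn_fin_append, List.prod_append]⟩

theorem isPalProd_prod_ofFn {c m : ℕ} {f : Fin m → G} (hf : ∀ i, IsPalProd X c (f i)) :
    IsPalProd X (c * m) (List.ofFn f).prod := by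
  induction m with
  | zero => simpa using isPalProd_zero X
  | succ m ih =>
    rw [List.ofFn_succ, List.prod_cons, mul_add_one, add_comm]
    exact (hf 0).mul (ih fun i => hf i.succ)

theorem IsPalProd.map {k : ℕ} {g : G} (hg : IsPalProd X k g) (φ : G →* H) :
    IsPalProd (φ ∘ X) k (φ g) := by
  obtain ⟨p, hp, rfl⟩ := hg
  exact ⟨φ ∘ p, fun i => (hp i).map φ, by simp [map_list_prod, List.map_ofFn]⟩

theorem palWidth_le {k : ℕ} (h : ∀ g, IsPalProd X k g) : palWidth X ≤ k :=
  iSup_le fun g => sInf_le ⟨k, rfl, h g⟩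

theorem le_palWidth {k : ℕ} (g : G) (h : ∀ l, IsPalProd X l g → k ≤ l) : (k : ℕ∞) ≤ palWidth X :=
  (le_sInf <| by rintro _ ⟨l, rfl, hl⟩; exact_mod_cast h l hl).trans (le_iSup (palLength X) g)

theorem isPalProd_three_commutatorElement_mul_zpow (hX : closure (Set.range X) = ⊤) (g : G)
    (i : Fin n) (m : ℤ) :
    IsPalProd X 3 (⁅g, X i⁆ * X i ^ m) := by
  obtain ⟨w, rfl⟩ := exists_evalWord_eq hX g
  have hx : IsPalindrome X (evalWord X w * X i * evalWord X w.reverse) := by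
    simpa [evalWord] using isPalindrome_evalWord_append_append_reverse X w [(i, true)] rfl
  have hw : IsPalindrome X (evalWord X w * evalWord X w.reverse)⁻¹ := by
    simpa [evalWord] using (isPalindrome_evalWord_append_append_reverse X w [] rfl).inv
  have h3 :=
    (hx.isPalProd_one.mul hw.isPalProd_one).mul (isPalindrome_zpow X i (m - 1)).isPalProd_one
  convert h3 using 1
  rw [commutatorElement_def, zpow_sub_one]
  group

end PalindromicLength

section CentralProducts

variable {G : Type*} [Group G]

theorem prod_ofFn_mul_prod_ofFn_of_mem_center {m : ℕ} (A B : Fin m → G)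
    (hB : ∀ i, B i ∈ center G) :
    (List.ofFn A).prod * (List.ofFn B).prod = (List.ofFn fun i => A i * B i).prod := by
  induction m with
  | zero => simp
  | succ m ih =>
    simp only [List.ofFn_succ, List.prod_cons]
    rw [← ih _ _ fun i => hB i.succ]
    simp only [mul_assoc, (mem_center_iff.mp (hB 0) _).symm]

theorem prod_ofFn_eq_single {m : ℕ} (f : Fin m → G) (i : Fin m) (h : ∀ j ≠ i, f j = 1) :
    (List.ofFn f).prod = f i := by
  rw [List.ofFn_eq_map, List.prod_map_eq_pow_single i f fun j hj _ => h j hj,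
    List.count_finRange, pow_one]

theorem commutatorElement_mul_left_of_mem_center {a b c : G} (h : ⁅b, c⁆ ∈ center G) :
    ⁅a * b, c⁆ = ⁅a, c⁆ * ⁅b, c⁆ := by
  rw [commutatorElement_mul_left_eq_conj_mul, mem_center_iff.mp h a, mul_inv_cancel_right,
    mem_center_iff.mp h]

theorem commutatorElement_mul_right_of_mem_center {a b c : G} (h : ⁅a, c⁆ ∈ center G) :
    ⁅a, b * c⁆ = ⁅a, b⁆ * ⁅a, c⁆ := by
  rw [commutatorElement_mul_right_eq_mul_conj, mul_assoc _ b, mem_center_iff.mp h b,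
    ← mul_assoc, mul_inv_cancel_right]

end CentralProducts

section Decomposition

variable {G : Type*} [Group G] {n : ℕ} {X : Fin n → G}

theorem closure_range_comp_eq_top {H : Type*} [Group H] {f : G →* H}
    (hf : Function.Surjective f) (hX : closure (Set.range X) = ⊤) :
    closure (Set.range (f ∘ X)) = ⊤ := by
  rw [Set.range_comp, ← MonoidHom.map_closure, hX, map_top_of_surjective f hf]

/-- As `⁅K, ⊤⁆` is central, `⁅·, ·⁆` is multiplicative in each variable on `K × G`. -/
theorem exists_prod_ofFn_commutatorElement_eq (hX : closure (Set.range X) = ⊤)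
    {K : Subgroup G} (hK : ⁅K, (⊤ : Subgroup G)⁆ ≤ center G) {z : G}
    (hz : z ∈ ⁅K, (⊤ : Subgroup G)⁆) :
    ∃ v : Fin n → G, (∀ i, v i ∈ K) ∧ (List.ofFn fun i => ⁅v i, X i⁆).prod = z := by
  have central {a : G} (ha : a ∈ K) (y : G) : ⁅a, y⁆ ∈ center G :=
    hK (commutator_mem_commutator ha (mem_top y))
  let T : Subgroup G :=
    { carrier := {z | ∃ v : Fin n → G, (∀ i, v i ∈ K) ∧ (List.ofFn fun i => ⁅v i, X i⁆).prod = z}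
      one_mem' := ⟨1, fun _ => K.one_mem, by simp⟩
      mul_mem' := by
        rintro _ _ ⟨v, hv, rfl⟩ ⟨w, hw, rfl⟩
        refine ⟨v * w, fun i => K.mul_mem (hv i) (hw i), ?_⟩
        rw [prod_ofFn_mul_prod_ofFn_of_mem_center _ _ fun i => central (hw i) _]
        simp only [Pi.mul_apply, commutatorElement_mul_left_of_mem_center (central (hw _) _)]
      inv_mem' := by
        rintro _ ⟨v, hv, rfl⟩
        refine ⟨v⁻¹, fun i => K.inv_mem (hv i), eq_inv_of_mul_eq_one_left ?_⟩
        rw [prod_ofFn_mul_prod_ofFn_of_mem_center _ _ fun i => central (hv i) _]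
        simp [← commutatorElement_mul_left_of_mem_center (central (hv _) _)] }
  have hT {a : G} (ha : a ∈ K) (y : G) : ⁅a, y⁆ ∈ T := by
    have hy : y ∈ closure (Set.range X) := by simp [hX]
    induction hy using closure_induction with
    | mem _ hy =>
      obtain ⟨i, rfl⟩ := hy
      refine ⟨Pi.mulSingle i a, fun j => by by_cases hj : j = i <;> simp [hj, ha], ?_⟩
      rw [prod_ofFn_eq_single _ i fun j hj => by simp [hj], Pi.mulSingle_eq_same]
    | one => rw [commutatorElement_one_right]; exact T.one_mem
    | mul y z _ _ hy hz =>
      rw [commutatorElement_mul_right_of_mem_center (central ha z)]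
      exact T.mul_mem hy hz
    | inv y _ hy =>
      have h1 : ⁅a, y⁻¹⁆ * ⁅a, y⁆ = 1 := by
        rw [← commutatorElement_mul_right_of_mem_center (central ha y), inv_mul_cancel,
          commutatorElement_one_right]
      rw [eq_inv_of_mul_eq_one_left h1]
      exact T.inv_mem hy
  exact commutator_le.mpr (fun a ha y _ => hT ha y) hz

theorem exists_prod_ofFn_zpow_eq (hX : closure (Set.range X) = ⊤) (hG : ∀ a b : G, a * b = b * a)
    (g : G) : ∃ m : Fin n → ℤ, (List.ofFn fun i => X i ^ m i).prod = g := by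
  let _ : CommGroup G := { ‹Group G› with mul_comm := hG }
  obtain ⟨m, hm⟩ := exists_of_mem_closure_range X g (by simp [hX])
  exact ⟨m, by rw [List.prod_ofFn, hm]⟩

theorem lowerCentralSeries_quotient_lowerCentralSeries_eq_bot (k : ℕ) :
    (⊤ : Subgroup (G ⧸ (⊤ : Subgroup G).lowerCentralSeries k)).lowerCentralSeries k = ⊥ := by
  rw [← map_top_of_surjective _ (QuotientGroup.mk'_surjective _), ← map_lowerCentralSeries,
    QuotientGroup.map_mk'_self]

theorem lowerCentralSeries_le_comap {H : Type*} [Group H] (f : G →* H) (k : ℕ) :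
    (⊤ : Subgroup G).lowerCentralSeries k ≤ ((⊤ : Subgroup H).lowerCentralSeries k).comap f := by
  induction k with
  | zero => simp
  | succ k ih =>
    refine commutator_le.mpr fun x hx g _ => ?_
    rw [mem_comap, map_commutatorElement]
    exact commutator_mem_commutator (ih hx) (mem_top _)

theorem lowerCentralSeries_le_center {k : ℕ}
    (hk : (⊤ : Subgroup G).lowerCentralSeries (k + 1) = ⊥) :
    (⊤ : Subgroup G).lowerCentralSeries k ≤ center G := by
  rw [← centralizer_univ, ← coe_top, ← commutator_eq_bot_iff_le_centralizer]
  exact hk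

/-- A decomposition lifted from the quotient by the last nontrivial term `⁅L, ⊤⁆` of the lower
central series is off by an element of `⁅L, ⊤⁆`, which is central and is absorbed into the
commutator factors. -/
theorem exists_prod_ofFn_commutatorElement_mul_zpow_eq (hX : closure (Set.range X) = ⊤) {c : ℕ}
    (hc : (⊤ : Subgroup G).lowerCentralSeries (c + 1) = ⊥) (g : G) :
    ∃ (h : Fin n → G) (m : Fin n → ℤ), (List.ofFn fun i => ⁅h i, X i⁆ * X i ^ m i).prod = g := by
  induction c generalizing G with
  | zero =>
    have hG (a b : G) : a * b = b * a := by
      rw [← commutatorElement_eq_one_iff_mul_comm, ← mem_bot, ← hc]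
      exact commutator_mem_commutator (mem_top a) (mem_top b)
    obtain ⟨m, hm⟩ := exists_prod_ofFn_zpow_eq hX hG g
    exact ⟨1, m, by simpa using hm⟩
  | succ c ih =>
    let N := (⊤ : Subgroup G).lowerCentralSeries (c + 1)
    have hπ : Function.Surjective (QuotientGroup.mk' N) := QuotientGroup.mk'_surjective N
    obtain ⟨h', m, hm⟩ := ih (closure_range_comp_eq_top hπ hX)
      (lowerCentralSeries_quotient_lowerCentralSeries_eq_bot (c + 1)) (QuotientGroup.mk' N g)
    obtain ⟨h, rfl⟩ := hπ.comp_left h'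
    set A := (List.ofFn fun i => ⁅h i, X i⁆ * X i ^ m i).prod
    have hz : A⁻¹ * g ∈ N := by
      rw [← QuotientGroup.ker_mk' N, MonoidHom.mem_ker, map_mul, map_inv, ← hm, inv_mul_eq_one]
      simp only [A, map_list_prod, List.map_ofFn, Function.comp_def, map_mul,
        map_commutatorElement, map_zpow]
    obtain ⟨v, hv, hvz⟩ :=
      exists_prod_ofFn_commutatorElement_eq hX (lowerCentralSeries_le_center hc) hz
    have hcent (i : Fin n) : ⁅v i, X i⁆ ∈ center G :=
      lowerCentralSeries_le_center hc (commutator_mem_commutator (hv i) (mem_top _))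
    refine ⟨h * v, m, ?_⟩
    rw [← mul_inv_cancel_left A g, ← hvz, prod_ofFn_mul_prod_ofFn_of_mem_center _ _ hcent]
    congr 2 with i
    rw [Pi.mul_apply, commutatorElement_mul_left_of_mem_center (hcent i), mul_assoc,
      ← mem_center_iff.mp (hcent i), mul_assoc]

end Decomposition

theorem palWidth_le_three_mul {G : Type*} [Group G] [Group.IsNilpotent G] {n : ℕ}
    {X : Fin n → G} (hX : closure (Set.range X) = ⊤) : palWidth X ≤ (3 * n : ℕ) := by
  obtain ⟨c, hc⟩ := Subgroup.nilpotent_iff_lowerCentralSeries.mp ‹Group.IsNilpotent G›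
  have hc' : (⊤ : Subgroup G).lowerCentralSeries (c + 1) = ⊥ :=
    eq_bot_mono (Subgroup.lowerCentralSeries_antitone _ c.le_succ) hc
  refine palWidth_le fun g => ?_
  obtain ⟨h, m, rfl⟩ := exists_prod_ofFn_commutatorElement_mul_zpow_eq hX hc' g
  exact isPalProd_prod_ofFn fun i => isPalProd_three_commutatorElement_mul_zpow hX (h i) i (m i)

open Finset in
theorem Finset.card_filter_le_one_of_lt {ι : Type*} [Fintype ι] [LinearOrder ι] {P : ι → Prop}
    [DecidablePred P] (h : ∀ i j, i < j → P i → P j → False) : #{i | P i} ≤ 1 := by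
  refine card_le_one.mpr fun i hi j hj => ?_
  simp only [mem_filter, mem_univ, true_and] at hi hj
  by_contra hij
  rcases lt_or_gt_of_ne hij with hlt | hlt
  exacts [h i j hlt hi hj, h j i hlt hj hi]

open Finset in
theorem Int.even_card_filter_odd_iff {ι : Type*} (s : Finset ι) (f : ι → ℤ) :
    Even #{i ∈ s | Odd (f i)} ↔ Even (∑ i ∈ s, f i) := by
  rw [← ZMod.natCast_eq_zero_iff_even, ← ZMod.intCast_eq_zero_iff_even, Int.cast_sum,
    Finset.card_filter, Nat.cast_sum]
  refine Eq.congr_left (Finset.sum_congr rfl fun i _ => ?_)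
  split_ifs with h
  · simp [ZMod.intCast_eq_one_iff_odd.mpr h]
  · simp [ZMod.intCast_eq_zero_iff_even.mpr (Int.not_odd_iff_even.mp h)]

/-- Coordinates on the free nilpotent group of class 2: `⟨a, b⟩` stands for
`x₁ ^ a₁ ⋯ xₙ ^ aₙ * ∏_{i < j} ⁅x j, x i⁆ ^ b i j`; the entries `b i j` with `j ≤ i` are
inert central coordinates. -/
@[ext]
structure NilTwo (n : ℕ) where
  a : Fin n → ℤ
  b : Fin n → Fin n → ℤ

namespace NilTwo

variable {n : ℕ}

instance : Mul (NilTwo n) :=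
  ⟨fun g h => ⟨g.a + h.a, fun i j => g.b i j + h.b i j + if i < j then h.a i * g.a j else 0⟩⟩

instance : One (NilTwo n) := ⟨⟨0, 0⟩⟩

instance : Inv (NilTwo n) :=
  ⟨fun g => ⟨-g.a, fun i j => (if i < j then g.a i * g.a j else 0) - g.b i j⟩⟩

@[simp] theorem mul_a (g h : NilTwo n) : (g * h).a = g.a + h.a := rfl
@[simp] theorem mul_b (g h : NilTwo n) (i j : Fin n) :
    (g * h).b i j = g.b i j + h.b i j + if i < j then h.a i * g.a j else 0 := rfl
@[simp] theorem one_a : (1 : NilTwo n).a = 0 := rfl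
@[simp] theorem one_b : (1 : NilTwo n).b = 0 := rfl
@[simp] theorem inv_a (g : NilTwo n) : g⁻¹.a = -g.a := rfl
@[simp] theorem inv_b (g : NilTwo n) (i j : Fin n) :
    g⁻¹.b i j = (if i < j then g.a i * g.a j else 0) - g.b i j := rfl

instance : Group (NilTwo n) :=
  Group.ofLeftAxioms
    (fun g h k => by ext <;> simp only [mul_a, mul_b, Pi.add_apply] <;> (try split_ifs) <;> ring)
    (fun g => by ext <;> simp)
    (fun g => by ext <;> simp only [mul_a, mul_b, inv_a, inv_b, one_a, one_b, Pi.add_apply,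
      Pi.neg_apply, Pi.zero_apply] <;> (try split_ifs) <;> ring)

def gen (i : Fin n) : NilTwo n := ⟨Pi.single i 1, 0⟩

/-- `x₁ ^ a₁ ⋯ xₙ ^ aₙ ↦ xₙ ^ aₙ ⋯ x₁ ^ a₁`: reading words backwards. -/
def reverse : NilTwo n →* (NilTwo n)ᵐᵒᵖ where
  toFun g := MulOpposite.op ⟨g.a, fun i j => (if i < j then g.a i * g.a j else 0) - g.b i j⟩
  map_one' := by
    apply MulOpposite.unop_injective
    ext <;> simp
  map_mul' g h := by
    apply MulOpposite.unop_injective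
    ext i j
    · simp [add_comm]
    · simp only [MulOpposite.unop_op, MulOpposite.unop_mul, mul_a, mul_b, Pi.add_apply]
      split_ifs <;> ring

theorem reverse_gen (i : Fin n) : reverse (gen i) = MulOpposite.op (gen i) := by
  apply MulOpposite.unop_injective
  ext p q
  · rfl
  · simp only [reverse, gen, MonoidHom.coe_mk, OneHom.coe_mk, MulOpposite.unop_op]
    split_ifs with h
    · rcases eq_or_ne p i with rfl | hp
      · simp [h.ne']
      · simp [hp]
    · simp

theorem two_mul_b_of_isPalindrome {p : NilTwo n} (hp : IsPalindrome gen p) {i j : Fin n}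
    (hij : i < j) : 2 * p.b i j = p.a i * p.a j := by
  have h := congrArg (fun g => g.b i j) (hp.unop_eq reverse reverse_gen)
  simp only [reverse, MonoidHom.coe_mk, OneHom.coe_mk, MulOpposite.unop_op, if_pos hij] at h
  linarith

theorem commutatorElement_mem_center (g h : NilTwo n) : ⁅g, h⁆ ∈ center (NilTwo n) := by
  refine mem_center_iff.mpr fun k => ?_
  have ha : ⁅g, h⁆.a = 0 := by simp [commutatorElement_def]
  ext i j
  · simp [add_comm]
  · simp [ha, add_comm]

theorem lowerCentralSeries_two : (⊤ : Subgroup (NilTwo n)).lowerCentralSeries 2 = ⊥ := by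
  rw [Subgroup.lowerCentralSeries_succ, commutator_eq_bot_iff_le_centralizer,
    coe_top, centralizer_univ]
  exact commutator_le.mpr fun g _ h _ => commutatorElement_mem_center g h

theorem a_prod_ofFn {k : ℕ} (p : Fin k → NilTwo n) : (List.ofFn p).prod.a = ∑ t, (p t).a := by
  induction k with
  | zero => simp
  | succ k ih => simp [List.ofFn_succ, Fin.sum_univ_succ, ih]

theorem even_b_prod_ofFn {k : ℕ} {p : Fin k → NilTwo n} {i j : Fin n}
    (hp : ∀ t, Even ((p t).a i) ∧ Even ((p t).a j) ∧ Even ((p t).b i j)) :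
    Even ((List.ofFn p).prod.b i j) := by
  let S : Submonoid (NilTwo n) :=
    { carrier := {g | Even (g.a i) ∧ Even (g.a j) ∧ Even (g.b i j)}
      one_mem' := by simp
      mul_mem' := by
        rintro g h ⟨hgi, hgj, hgb⟩ ⟨hhi, hhj, hhb⟩
        refine ⟨hgi.add hhi, hgj.add hhj, (hgb.add hhb).add ?_⟩
        split_ifs
        exacts [hhi.mul_right _, Even.zero] }
  exact (S.list_prod_mem fun g hg => by obtain ⟨t, rfl⟩ := List.mem_ofFn.mp hg; exact hp t).2.2

theorem even_b_of_isPalindrome {p : NilTwo n} (hp : IsPalindrome gen p) {i j : Fin n}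
    (hij : i < j) (hi : Even (p.a i)) (hj : Even (p.a j)) : Even (p.b i j) := by
  obtain ⟨⟨x, hx⟩, ⟨y, hy⟩⟩ := And.intro hi hj
  have h := two_mul_b_of_isPalindrome hp hij
  rw [hx, hy] at h
  exact ⟨x * y, by linarith⟩

open Finset in
theorem card_odd_a_le_one_of_isPalindrome {p : NilTwo n} (hp : IsPalindrome gen p) :
    #{i | Odd (p.a i)} ≤ 1 :=
  card_filter_le_one_of_lt fun i j hij hi hj => by
    have h := hi.mul hj
    rw [← two_mul_b_of_isPalindrome hp hij, ← Int.not_even_iff_odd] at h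
    exact h (even_two_mul _)

open Finset in
/-- Each palindrome has at most one odd coordinate, and each odd coordinate of a factor must be
matched by another one since `g.a` is even; if two coordinates `i < j` were even in every
factor, then `g.b i j` would be even. -/
theorem two_mul_sub_one_le_of_isPalProd {k : ℕ} {g : NilTwo n} (hg : IsPalProd gen k g)
    (ha : ∀ i, Even (g.a i)) (hb : ∀ i j, i < j → Odd (g.b i j)) : 2 * (n - 1) ≤ k := by
  obtain ⟨p, hp, rfl⟩ := hg
  let c (i : Fin n) : ℕ := #{t | Odd ((p t).a i)}
  have hc_sum : ∑ i, c i ≤ k := calc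
    ∑ i, c i = ∑ t, #{i | Odd ((p t).a i)} := by simp only [c, card_filter]; exact sum_comm
    _ ≤ ∑ _t : Fin k, 1 := sum_le_sum fun t _ => card_odd_a_le_one_of_isPalindrome (hp t)
    _ = k := by simp
  have hc_even (i : Fin n) : Even (c i) := by
    rw [Int.even_card_filter_odd_iff, ← Finset.sum_apply, ← a_prod_ofFn]
    exact ha i
  have hc_zero : #{i | c i = 0} ≤ 1 := card_filter_le_one_of_lt fun i j hij hi hj => by
    simp only [c, card_eq_zero, filter_eq_empty_iff, mem_univ, true_implies,
      Int.not_odd_iff_even] at hi hj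
    exact Int.not_even_iff_odd.mpr (hb i j hij) <| even_b_prod_ofFn fun t =>
      ⟨@hi t, @hj t, even_b_of_isPalindrome (hp t) hij (@hi t) (@hj t)⟩
  have hc_pos : n - 1 ≤ #{i | c i ≠ 0} := by
    have hsplit := card_filter_add_card_filter_not (s := univ) fun i => c i = 0
    simp only [card_univ, Fintype.card_fin, ← ne_eq] at hsplit
    omega
  calc 2 * (n - 1) ≤ #{i | c i ≠ 0} • 2 := by rw [smul_eq_mul]; omega
    _ ≤ ∑ i ∈ {i | c i ≠ 0}, c i := card_nsmul_le_sum _ _ _ fun i hi => by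
        obtain ⟨m, hm⟩ := hc_even i
        simp only [mem_filter] at hi
        omega
    _ ≤ ∑ i, c i := sum_le_sum_of_subset (subset_univ _)
    _ ≤ k := hc_sum

end NilTwo

theorem two_mul_sub_one_le_palWidth {G : Type*} [Group G] {n : ℕ} {X : Fin n → G}
    (φ : G →* NilTwo n) (hφ : φ ∘ X = NilTwo.gen) : ((2 * (n - 1) : ℕ) : ℕ∞) ≤ palWidth X := by
  let w : List (Fin n × Bool) := List.ofFn fun i => (i, true)
  refine le_palWidth (evalWord X w.reverse * (evalWord X w)⁻¹) fun k hk => ?_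
  have hk' := hk.map φ
  rw [hφ, map_mul, map_inv, map_evalWord, map_evalWord, hφ,
    ← unop_map_evalWord NilTwo.reverse NilTwo.reverse_gen] at hk'
  set y := evalWord NilTwo.gen w
  have hy (i : Fin n) : y.a i = 1 := by
    simp [y, w, evalWord, List.map_ofFn, Function.comp_def, NilTwo.a_prod_ofFn, NilTwo.gen]
  refine NilTwo.two_mul_sub_one_le_of_isPalProd hk' (fun i => ?_) (fun i j hij => ?_)
  · simp [NilTwo.reverse]
  · simp only [NilTwo.reverse, MonoidHom.coe_mk, OneHom.coe_mk, MulOpposite.unop_op, NilTwo.mul_b,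
      NilTwo.inv_b, NilTwo.inv_a, Pi.neg_apply, hy, hij, if_true, mul_one]
    exact ⟨-y.b i j, by ring⟩

theorem closure_range_nilGen (n r : ℕ) : closure (Set.range (nilGen n r)) = ⊤ :=
  closure_range_comp_eq_top (f := QuotientGroup.mk' _) (X := FreeGroup.of)
    (QuotientGroup.mk'_surjective _) (FreeGroup.closure_range_of _)

instance (n r : ℕ) : Group.IsNilpotent (FreeNilpotent n r) :=
  Subgroup.nilpotent_iff_lowerCentralSeries.mpr
    ⟨r, lowerCentralSeries_quotient_lowerCentralSeries_eq_bot r⟩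

def FreeNilpotent.toNilTwo {n r : ℕ} (hr : 2 ≤ r) : FreeNilpotent n r →* NilTwo n :=
  QuotientGroup.lift _ (FreeGroup.lift NilTwo.gen) fun x hx => by
    have h := lowerCentralSeries_le_comap (FreeGroup.lift NilTwo.gen) r hx
    rwa [mem_comap, eq_bot_mono (Subgroup.lowerCentralSeries_antitone _ hr)
      NilTwo.lowerCentralSeries_two, mem_bot] at h

theorem FreeNilpotent.toNilTwo_comp_nilGen {n r : ℕ} (hr : 2 ≤ r) :
    FreeNilpotent.toNilTwo hr ∘ nilGen n r = NilTwo.gen := by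
  ext1 i
  exact FreeGroup.lift_apply_of

theorem pw_freeNilpotent_bounds_general (n r : ℕ) (hr : 3 ≤ r) :
    ((2 * (n - 1) : ℕ) : ℕ∞) ≤ palWidth (nilGen n r) ∧
      palWidth (nilGen n r) ≤ ((3 * n : ℕ) : ℕ∞) :=
  ⟨two_mul_sub_one_le_palWidth _ (FreeNilpotent.toNilTwo_comp_nilGen (by omega)),
    palWidth_le_three_mul (closure_range_nilGen n r)⟩

/-- For `n ≥ 2` and `r ≥ 3`, `2(n-1) ≤ pw(N_{n,r}, X) ≤ 3n`. -/
theorem pw_freeNilpotent_bounds (n r : ℕ) (hn : 2 ≤ n) (hr : 3 ≤ r) :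
    ((2 * (n - 1) : ℕ) : ℕ∞) ≤ palWidth (nilGen n r) ∧
      palWidth (nilGen n r) ≤ ((3 * n : ℕ) : ℕ∞) :=
  pw_freeNilpotent_bounds_general n r hr
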